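/- Let R be an n × d matrix whose columns are permutations of {1,...,n}. Sample I uniformly from {1,...,n} and, conditionally on I, draw independent coordinates U_j ~ Beta(R_{I,j}, n + 1 − R_{I,j}) for j = 1,...,d. Then the marginal distribution of each coordinate U_j is uniform on [0,1]. -/

import Mathlib

open MeasureTheory Set

noncomputable def betaTailCdf (n r : ℕ) (u : ℝ) : ℝ :=
  ∑ p ∈ Finset.Icc r n, (n.choose p : ℝ) * u ^ p * (1 - u) ^ (n - p)

lemma betaTailCdf_one {n r : ℕ} (h2 : r ≤ n) : betaTailCdf n r 1 = 1 := by
  unfold betaTailCdf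
  rw [Finset.sum_eq_single n]
  · simp
  · intro p hp hpn
    have : 0 < n - p := Nat.sub_pos_of_lt (lt_of_le_of_ne (Finset.mem_Icc.mp hp).2 hpn)
    simp [zero_pow this.ne']
  · intro h; exact absurd (Finset.mem_Icc.mpr ⟨h2, le_refl n⟩) h

lemma betaTailCdf_nonneg {n r : ℕ} {u : ℝ} (h : u ∈ Icc (0:ℝ) 1) :
    0 ≤ betaTailCdf n r u := by
  apply Finset.sum_nonneg
  intro p _
  have h0 : (0:ℝ) ≤ u := h.1
  have h1 : (0:ℝ) ≤ 1 - u := by linarith [h.2]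
  positivity

lemma sum_betaTailCdf (n : ℕ) (u : ℝ) :
    ∑ r ∈ Finset.Icc 1 n, betaTailCdf n r u = n * u := by
  unfold betaTailCdf
  rw [Finset.sum_comm' (t' := Finset.Icc 1 n) (s' := fun p => Finset.Icc 1 p)
    (by intro r p; simp only [Finset.mem_Icc]; omega)]
  simp only [Finset.sum_const, Nat.card_Icc, Nat.add_sub_cancel, nsmul_eq_mul]
  rcases Nat.eq_zero_or_pos n with h0 | hpos
  · subst h0; simp
  obtain ⟨m, rfl⟩ : ∃ m, n = m + 1 := ⟨n - 1, by omega⟩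
  rw [show Finset.Icc 1 (m+1) = Finset.Ico 1 (m+2) from (Finset.Ico_add_one_right_eq_Icc 1 (m+1)).symm,
    Finset.sum_Ico_eq_sum_range]
  show ∑ k ∈ Finset.range (m+1), ((1+k:ℕ):ℝ) * (((m+1).choose (1+k) : ℝ) * u ^ (1+k) * (1 - u) ^ (m+1-(1+k))) = ((m+1:ℕ):ℝ) * u
  have key : ∀ q, ((1+q : ℕ) : ℝ) * (((m+1).choose (1+q) : ℝ) * u ^ (1+q) * (1 - u) ^ (m+1-(1+q)))
      = ((m:ℝ)+1) * u * ((m.choose q : ℝ) * u ^ q * (1 - u) ^ (m - q)) := by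
    intro q
    have hc : ((m+1) * m.choose q : ℕ) = ((m+1).choose (q+1) * (q+1) : ℕ) :=
      Nat.add_one_mul_choose_eq m q
    have hc' : ((m:ℝ)+1) * (m.choose q : ℝ) = ((m+1).choose (q+1) : ℝ) * ((q:ℝ)+1) := by
      exact_mod_cast congrArg (Nat.cast : ℕ → ℝ) hc
    have he : m + 1 - (1 + q) = m - q := by omega
    rw [he, pow_add, pow_one, add_comm 1 q]
    push_cast
    linear_combination (-(u * u ^ q * (1 - u) ^ (m - q))) * hc'
  rw [Finset.sum_congr rfl (fun q _ => key q), ← Finset.mul_sum]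
  have hb : ∑ q ∈ Finset.range (m+1), (m.choose q : ℝ) * u ^ q * (1 - u) ^ (m - q) = 1 := by
    have h := Commute.add_pow (Commute.all u (1-u)) m
    calc ∑ q ∈ Finset.range (m+1), (m.choose q : ℝ) * u ^ q * (1 - u) ^ (m - q)
        = (u + (1-u))^m := by rw [h]; exact Finset.sum_congr rfl fun q _ => by ring
      _ = 1 := by norm_num
  rw [hb, mul_one]; push_cast; ring

/-- **Algorithm 1 (empirical beta copula sampling) has uniform margins.**
Let `R` be an `n × d` matrix whose columns are permutations of `{1,…,n}`.
Sample `I` uniformly from `{1,…,n}` and, conditionally on `I`, draw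
independent coordinates `U j ~ Beta (R I j, n + 1 - R I j)` (formalized via
the conditional joint CDF on `[0,1]^d`).  Then each coordinate `U j` is
uniformly distributed on `[0,1]`. -/
theorem algorithm1_uniform_margins
    (Ω : Type) [MeasurableSpace Ω] (ℙ : Measure Ω) [IsProbabilityMeasure ℙ]
    (n d : ℕ) (hn : 0 < n)
    (R : Fin n → Fin d → ℕ)
    (hR : ∀ j : Fin d, Set.BijOn (fun i => R i j) Set.univ (Set.Icc 1 n))
    (I : Ω → Fin n) (hImeas : Measurable I)
    (U : Fin d → Ω → ℝ) (hUmeas : ∀ j, Measurable (U j))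
    (hIunif : ∀ i, ℙ {ω | I ω = i} = (n : ENNReal)⁻¹)
    (hcond : ∀ i : Fin n, ∀ u : Fin d → ℝ, (∀ j, u j ∈ Icc (0:ℝ) 1) →
      ℙ {ω | (∀ j, U j ω ≤ u j) ∧ I ω = i} =
        (n : ENNReal)⁻¹ * ENNReal.ofReal (∏ j : Fin d, betaTailCdf n (R i j) (u j))) :
    ∀ j : Fin d, ∀ u ∈ Icc (0:ℝ) 1,
      ℙ {ω | U j ω ≤ u} = ENNReal.ofReal u := by
  intro j u hu
  have hRmem : ∀ i k, 1 ≤ R i k ∧ R i k ≤ n := fun i k => (hR k).mapsTo (mem_univ i)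
  set v : Fin d → ℝ := fun k => if k = j then u else 1 with hv
  have hvmem : ∀ k, v k ∈ Icc (0:ℝ) 1 := by
    intro k; by_cases h : k = j <;> simp [hv, h, hu]
  -- Step A
  have hA : ∀ i, ℙ {ω | (∀ k, U k ω ≤ v k) ∧ I ω = i} =
      (n : ENNReal)⁻¹ * ENNReal.ofReal (betaTailCdf n (R i j) u) := by
    intro i
    rw [hcond i v hvmem]
    congr 2
    rw [Finset.prod_eq_single j]
    · simp [hv]
    · intro k _ hk
      simp only [hv, if_neg hk]
      exact betaTailCdf_one (hRmem i k).2
    · simp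
  -- Step B
  have hB : ∀ i, ℙ {ω | (∀ k, U k ω ≤ (1:ℝ)) ∧ I ω = i} = (n : ENNReal)⁻¹ := by
    intro i
    have := hcond i (fun _ => 1) (fun _ => by norm_num)
    rw [this, Finset.prod_congr rfl (fun k _ => betaTailCdf_one (hRmem i k).2)]
    simp
  -- Step C
  have hC : ∀ i, ℙ {ω | U j ω ≤ u ∧ I ω = i} =
      (n : ENNReal)⁻¹ * ENNReal.ofReal (betaTailCdf n (R i j) u) := by
    intro i
    set Ai := {ω | (∀ k, U k ω ≤ v k) ∧ I ω = i} with hAi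
    set Bi := {ω | U j ω ≤ u ∧ I ω = i} with hBi
    set Di := {ω | (∀ k, U k ω ≤ (1:ℝ)) ∧ I ω = i} with hDi
    set Ci := {ω | I ω = i} with hCi
    have hsub : Ai ⊆ Bi := by
      intro ω ⟨h1, h2⟩
      exact ⟨by have := h1 j; simpa [hv] using this, h2⟩
    have hDC : Di ⊆ Ci := fun ω h => h.2
    have hDmeas : MeasurableSet Di := by
      have : Di = (⋂ k, {ω | U k ω ≤ (1:ℝ)}) ∩ I ⁻¹' {i} := by
        ext ω; simp [hDi, Set.mem_iInter, and_comm]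
      rw [this]
      exact (MeasurableSet.iInter fun k => (hUmeas k) measurableSet_Iic).inter
        (hImeas (measurableSet_singleton i))
    have hnull : ℙ (Ci \ Di) = 0 := by
      rw [measure_diff hDC hDmeas.nullMeasurableSet (measure_ne_top ℙ Di), hB i, hIunif i,
        tsub_self]
    have hBA : Bi \ Ai ⊆ Ci \ Di := by
      rintro ω ⟨⟨hju, hIi⟩, hnA⟩
      refine ⟨hIi, fun hD => hnA ⟨?_, hIi⟩⟩
      intro k
      by_cases hk : k = j
      · subst hk; simpa [hv] using hju
      · simpa [hv, hk] using hD.1 k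
    have : ℙ (Bi \ Ai) = 0 := measure_mono_null hBA hnull
    have hBle : ℙ Bi ≤ ℙ Ai := by
      calc ℙ Bi ≤ ℙ (Ai ∪ (Bi \ Ai)) := measure_mono (fun ω h => by
              by_cases hA' : ω ∈ Ai
              · exact Or.inl hA'
              · exact Or.inr ⟨h, hA'⟩)
        _ ≤ ℙ Ai + ℙ (Bi \ Ai) := measure_union_le _ _
        _ = ℙ Ai := by rw [this, add_zero]
    have := le_antisymm hBle (measure_mono hsub)
    rw [this, hA i]
  -- Step D
  have hD : ℙ {ω | U j ω ≤ u} = ∑ i, ℙ {ω | U j ω ≤ u ∧ I ω = i} := by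
    have hunion : {ω | U j ω ≤ u} = ⋃ i, {ω | U j ω ≤ u ∧ I ω = i} := by
      ext ω; simp
    rw [hunion, measure_iUnion, tsum_fintype]
    · intro a b hab
      refine Set.disjoint_left.mpr fun ω ha hb => ?_
      exact hab (ha.2 ▸ hb.2.symm ▸ rfl)
    · intro i
      exact ((hUmeas j) measurableSet_Iic).inter (hImeas (measurableSet_singleton i))
  rw [hD]
  -- Step E
  rw [Finset.sum_congr rfl (fun i _ => hC i), ← Finset.mul_sum]
  have hofsum : ∑ i : Fin n, ENNReal.ofReal (betaTailCdf n (R i j) u)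
      = ENNReal.ofReal (∑ i : Fin n, betaTailCdf n (R i j) u) := by
    rw [ENNReal.ofReal_sum_of_nonneg (fun i _ => betaTailCdf_nonneg hu)]
  rw [hofsum]
  have hre : ∑ i : Fin n, betaTailCdf n (R i j) u
      = ∑ r ∈ Finset.Icc 1 n, betaTailCdf n r u := by
    apply Finset.sum_bij (fun i _ => R i j)
    · intro i _
      exact Finset.mem_Icc.mpr (hRmem i j)
    · intro a _ b _ hab
      exact (hR j).injOn (mem_univ a) (mem_univ b) hab
    · intro r hr
      obtain ⟨i, _, hi⟩ := (hR j).surjOn (Set.mem_Icc.mpr (Finset.mem_Icc.mp hr))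
      exact ⟨i, Finset.mem_univ i, hi⟩
    · intro i _; rfl
  rw [hre, sum_betaTailCdf, ENNReal.ofReal_mul (by positivity), ENNReal.ofReal_natCast,
    ← mul_assoc, ENNReal.inv_mul_cancel (by exact_mod_cast hn.ne') (ENNReal.natCast_ne_top n),
    one_mul]
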